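/- arXiv:2603.07913 — 2 statements merged into one kernel-verified Lean document; each statement's English description precedes it below -/
import Mathlib

section
/- Let H be a complex Hilbert space. Let D : H → H be a bounded self-adjoint invertible operator, ψ ∈ H a unit vector with D ψ = λ_D • ψ for some real λ_D < 0, and ω > 0 such that Re ⟪D v, v⟫ ≥ ω ‖v‖² for every v orthogonal to ψ. Let C : H → H be a bounded self-adjoint positive semidefinite operator (Re ⟪C u, u⟫ ≥ 0 for all u). Let f : ℝ → ℝ be continuous and monotone nondecreasing with f(t) ≥ β₋ for all t ∈ ℝ, where β₋ > 0, and set M := cfc f D. If λ ∈ ℂ is a non-real eigenvalue of the block operator L(p, q) = (D q, −C p − M q) on H × H, then Re λ ≤ −f(λ_D)/2 ≤ −β₋/2. -/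
/-!
Pairing the second eigen-equation with `D P₂ = λ P₁` gives
`λ ⟪P₁, C P₁⟫ + conj λ ⟪P₂, D P₂⟫ + ⟪P₂, M D P₂⟫ = 0`, all three brackets being real.
For non-real `λ` the imaginary part forces `⟪P₁, C P₁⟫ = ⟪P₂, D P₂⟫ =: a`, and the real part
then reads `2 a Re λ = -⟪P₂, M D P₂⟫`. The spectral gap puts the spectrum of `D` inside
`{λ_D} ∪ [ω, ∞)`, where `f t * t ≥ f λ_D * t` by monotonicity, so `⟪P₂, M D P₂⟫ ≥ f λ_D * a`,
whence `Re λ ≤ -f λ_D / 2` as soon as `a > 0`. If `a = 0`, positivity of `C` gives `C P₁ = 0`,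
and `λ` would be a non-real eigenvalue of the self-adjoint operator `-M`.
-/

open scoped InnerProductSpace

open ContinuousLinearMap RCLike ComplexConjugate

theorem cfc_mul_id {R A : Type*} {p : A → Prop} [CommSemiring R] [StarRing R] [MetricSpace R]
    [IsTopologicalSemiring R] [ContinuousStar R] [TopologicalSpace A] [Ring A] [StarRing A]
    [Algebra R A] [ContinuousFunctionalCalculus R A p] (f : R → R) (a : A)
    (hf : ContinuousOn f (spectrum R a) := by cfc_cont_tac) (ha : p a := by cfc_tac) :
    cfc f a * a = cfc (fun x ↦ f x * x) a := by
  rw [cfc_mul f (fun x ↦ x) a, cfc_id' R a]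

theorem Complex.re_le_of_mul_add_conj_mul_add_eq_zero {z : ℂ} (hz : z.im ≠ 0) {a d e κ : ℝ}
    (ha : 0 < a) (he : κ * d ≤ e) (h : z * a + conj z * d + e = 0) : z.re ≤ -κ / 2 := by
  have him : z.im * (a - d) = 0 := by
    have := congrArg Complex.im h
    simp only [Complex.add_im, Complex.mul_im, Complex.conj_re, Complex.conj_im,
      Complex.ofReal_re, Complex.ofReal_im, mul_zero, add_zero, Complex.zero_im] at this
    linear_combination this
  have hre : z.re * (a + d) + e = 0 := by
    have := congrArg Complex.re h
    simp only [Complex.add_re, Complex.mul_re, Complex.conj_re, Complex.conj_im,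
      Complex.ofReal_re, Complex.ofReal_im, mul_zero, sub_zero, Complex.zero_re] at this
    linear_combination this
  obtain rfl : a = d := by simpa [hz, sub_eq_zero] using him
  nlinarith

section InnerProductSpace

variable {𝕜 E : Type*} [RCLike 𝕜] [NormedAddCommGroup E] [InnerProductSpace 𝕜 E]

theorem mul_norm_le_norm_of_mul_norm_sq_le_re_inner {b : ℝ} {x y : E}
    (h : b * ‖x‖ ^ 2 ≤ re ⟪x, y⟫_𝕜) : b * ‖x‖ ≤ ‖y‖ := by
  rcases (norm_nonneg x).eq_or_lt with hx | hx
  · simp [← hx]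
  · have : b * ‖x‖ * ‖x‖ ≤ ‖y‖ * ‖x‖ := by
      nlinarith [re_inner_le_norm (𝕜 := 𝕜) x y]
    exact le_of_mul_le_mul_right this hx

variable [CompleteSpace E]

theorem IsSelfAdjoint.isUnit_of_le_norm_apply {T : E →L[𝕜] E} (hT : IsSelfAdjoint T) {c : ℝ}
    (hc : 0 < c) (h : ∀ v, c * ‖v‖ ≤ ‖T v‖) : IsUnit T := by
  rw [isUnit_iff_bijective, bijective_iff_dense_range_and_antilipschitz,
    Submodule.topologicalClosure_eq_top_iff, orthogonal_range, hT.adjoint_eq,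
    Submodule.eq_bot_iff]
  refine ⟨fun v hv ↦ ?_, ⟨(Real.toNNReal c)⁻¹, T.antilipschitz_of_bound fun v ↦ ?_⟩⟩
  · have hTv : T v = 0 := hv
    exact norm_le_zero_iff.mp (le_of_mul_le_mul_left (by simpa [hTv] using h v) hc)
  · rw [NNReal.coe_inv, Real.coe_toNNReal _ hc.le, inv_mul_eq_div, le_div_iff₀ hc, mul_comm]
    exact h v

-- `span ψ` and `ψᗮ` are both `T`-invariant, so Pythagoras applies to `v` and to `T v`.
theorem IsSelfAdjoint.min_mul_norm_le_norm_apply {T : E →L[𝕜] E} (hT : IsSelfAdjoint T)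
    {ψ : E} (hψ : ‖ψ‖ = 1) {a : ℝ} (hTψ : T ψ = (a : 𝕜) • ψ) {b : ℝ} (hb : 0 ≤ b)
    (hgap : ∀ w, ⟪ψ, w⟫_𝕜 = 0 → b * ‖w‖ ^ 2 ≤ re ⟪w, T w⟫_𝕜) (v : E) :
    min |a| b * ‖v‖ ≤ ‖T v‖ := by
  set α := ⟪ψ, v⟫_𝕜
  set w := v - α • ψ
  have hψψ : ⟪ψ, ψ⟫_𝕜 = 1 := by simp [inner_self_eq_norm_sq_to_K, hψ]
  have hw : ⟪ψ, w⟫_𝕜 = 0 := by rw [inner_sub_right, inner_smul_right, hψψ, mul_one, sub_self]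
  have hsymm : ∀ x y, ⟪T x, y⟫_𝕜 = ⟪x, T y⟫_𝕜 := hT.isSymmetric
  have hTw : ⟪(α * a) • ψ, T w⟫_𝕜 = 0 := by
    rw [inner_smul_left, ← hsymm, hTψ, inner_smul_left, hw, mul_zero, mul_zero]
  have hv : v = α • ψ + w := by simp [w]
  have hTv : T v = (α * a) • ψ + T w := by
    rw [hv, map_add, map_smul, hTψ, smul_smul]
  have hnorm_v : ‖v‖ ^ 2 = ‖α‖ ^ 2 + ‖w‖ ^ 2 := by
    rw [hv, sq, norm_add_sq_eq_norm_sq_add_norm_sq_of_inner_eq_zero _ _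
      (by rw [inner_smul_left, hw, mul_zero])]
    simp [norm_smul, hψ, sq]
  have hnorm_Tv : ‖T v‖ ^ 2 = ‖α‖ ^ 2 * a ^ 2 + ‖T w‖ ^ 2 := by
    rw [hTv, sq, norm_add_sq_eq_norm_sq_add_norm_sq_of_inner_eq_zero _ _ hTw]
    simp only [norm_smul, norm_mul, hψ, norm_ofReal, mul_one]
    rw [← sq_abs a]
    ring
  have hc_a : min |a| b ^ 2 ≤ a ^ 2 := by
    rw [← sq_abs a]; gcongr; exact min_le_left _ _
  have hc_w : min |a| b * ‖w‖ ≤ ‖T w‖ :=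
    (mul_le_mul_of_nonneg_right (min_le_right _ _) (norm_nonneg w)).trans
      (mul_norm_le_norm_of_mul_norm_sq_le_re_inner (hgap w hw))
  rw [← pow_le_pow_iff_left₀ (by positivity) (norm_nonneg _) two_ne_zero, mul_pow, hnorm_v,
    hnorm_Tv]
  nlinarith [pow_le_pow_left₀ (by positivity) hc_w 2, sq_nonneg ‖α‖]

end InnerProductSpace

section ComplexHilbert

variable {H : Type*} [NormedAddCommGroup H] [InnerProductSpace ℂ H] [CompleteSpace H]

theorem IsSelfAdjoint.eq_zero_of_apply_eq_smul {T : H →L[ℂ] H} (hT : IsSelfAdjoint T) {μ : ℂ}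
    (hμ : μ.im ≠ 0) {x : H} (hx : T x = μ • x) : x = 0 := by
  by_contra hx0
  have hμ_eig : Module.End.HasEigenvalue (T : H →ₗ[ℂ] H) μ :=
    Module.End.hasEigenvalue_of_hasEigenvector ⟨Module.End.mem_eigenspace_iff.mpr hx, hx0⟩
  exact hμ (Complex.conj_eq_iff_im.mp (hT.isSymmetric.conj_eigenvalue_eq_self hμ_eig))

theorem IsSelfAdjoint.ofReal_re_inner_self_apply {T : H →L[ℂ] H} (hT : IsSelfAdjoint T)
    (x : H) : ((⟪x, T x⟫_ℂ).re : ℂ) = ⟪x, T x⟫_ℂ :=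
  hT.isSymmetric.coe_re_inner_self_apply x

theorem ContinuousLinearMap.IsPositive.apply_eq_zero_of_re_inner_eq_zero {T : H →L[ℂ] H}
    (hT : T.IsPositive) {x : H} (hx : (⟪x, T x⟫_ℂ).re = 0) : T x = 0 := by
  have hT0 : 0 ≤ T := (nonneg_iff_isPositive T).mpr hT
  set S := CFC.sqrt T
  have hS : ∀ y z, ⟪S y, z⟫_ℂ = ⟪y, S z⟫_ℂ := (CFC.sqrt_nonneg T).isSelfAdjoint.isSymmetric
  have hTS : T x = S (S x) :=
    (congrArg (fun U : H →L[ℂ] H ↦ U x) (CFC.sqrt_mul_sqrt_self T)).symm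
  have hSx : S x = 0 := by
    rw [hTS, ← hS, ← re_to_complex, inner_self_eq_norm_sq] at hx
    simpa using hx
  rw [hTS, hSx, map_zero]

theorem re_inner_cfc_apply_le {a : H →L[ℂ] H} {f g : ℝ → ℝ}
    (h : ∀ t ∈ spectrum ℝ a, f t ≤ g t) (x : H)
    (hf : ContinuousOn f (spectrum ℝ a) := by cfc_cont_tac)
    (hg : ContinuousOn g (spectrum ℝ a) := by cfc_cont_tac) :
    (⟪x, cfc f a x⟫_ℂ).re ≤ (⟪x, cfc g a x⟫_ℂ).re := by
  have := ((le_def _ _).mp (cfc_mono h)).re_inner_nonneg_right x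
  rwa [sub_apply, inner_sub_right, map_sub, sub_nonneg] at this

theorem IsSelfAdjoint.spectrum_subset_of_eigenvector_of_gap {D : H →L[ℂ] H}
    (hD : IsSelfAdjoint D) {ψ : H} (hψ : ‖ψ‖ = 1) {lamD : ℝ} (hDψ : D ψ = lamD • ψ) {ω : ℝ}
    (hgap : ∀ v : H, ⟪ψ, v⟫_ℂ = 0 → ω * ‖v‖ ^ 2 ≤ (⟪v, D v⟫_ℂ).re) :
    spectrum ℝ D ⊆ {lamD} ∪ Set.Ici ω := by
  intro μ hμ
  by_contra hμ'
  simp only [Set.mem_union, Set.mem_singleton_iff, Set.mem_Ici, not_or, not_le,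
    ← ne_eq] at hμ'
  obtain ⟨hne, hlt⟩ := hμ'
  set T := D - algebraMap ℝ (H →L[ℂ] H) μ
  have hTapp : ∀ v, T v = D v - (μ : ℂ) • v := fun v ↦ by
    simp [T, Algebra.algebraMap_eq_smul_one, Complex.coe_smul]
  have hTψ : T ψ = ((lamD - μ : ℝ) : ℂ) • ψ := by
    rw [hTapp, hDψ, ← Complex.coe_smul, Complex.ofReal_sub, sub_smul]
  have hTgap : ∀ w, ⟪ψ, w⟫_ℂ = 0 → (ω - μ) * ‖w‖ ^ 2 ≤ re ⟪w, T w⟫_ℂ := fun w hw ↦ by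
    have hre : re ⟪w, T w⟫_ℂ = (⟪w, D w⟫_ℂ).re - μ * ‖w‖ ^ 2 := by
      rw [hTapp, inner_sub_right, inner_smul_right, inner_self_eq_norm_sq_to_K]
      simp [← Complex.ofReal_pow]
    rw [hre, sub_mul]
    linarith [hgap w hw]
  have hT : IsSelfAdjoint T := hD.sub (.algebraMap _ (.all μ))
  have hunit : IsUnit T :=
    hT.isUnit_of_le_norm_apply (lt_min (abs_pos.mpr (sub_ne_zero.mpr hne.symm)) (by linarith))
      (hT.min_mul_norm_le_norm_apply hψ hTψ (by linarith) hTgap)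
  exact spectrum.mem_iff.mp hμ (by simpa [T] using hunit.neg)

theorem mul_inner_add_conj_mul_inner_add_inner_eq_zero {C D M : H →L[ℂ] H}
    (hC : IsSelfAdjoint C) (hM : IsSelfAdjoint M) {lam : ℂ} {P₁ P₂ : H}
    (h1 : D P₂ = lam • P₁) (h2 : -C P₁ - M P₂ = lam • P₂) :
    lam * ⟪P₁, C P₁⟫_ℂ + conj lam * ⟪P₂, D P₂⟫_ℂ + ⟪P₂, M (D P₂)⟫_ℂ = 0 := by
  have hCD : ⟪C P₁, D P₂⟫_ℂ = lam * ⟪P₁, C P₁⟫_ℂ := by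
    rw [h1, inner_smul_right]
    exact congrArg (lam * ·) (hC.isSymmetric P₁ P₁)
  have hMD : ⟪M P₂, D P₂⟫_ℂ = ⟪P₂, M (D P₂)⟫_ℂ := hM.isSymmetric P₂ (D P₂)
  have := congrArg (fun y ↦ ⟪y, D P₂⟫_ℂ) h2
  simp only [inner_sub_left, inner_neg_left, inner_smul_left, hCD, hMD] at this
  linear_combination -this

theorem apply_ne_zero_of_block_eigenvector {C D M : H →L[ℂ] H} (hM : IsSelfAdjoint M) {lam : ℂ}
    (hlam : lam.im ≠ 0) {P₁ P₂ : H} (hP : (P₁, P₂) ≠ (0, 0)) (h1 : D P₂ = lam • P₁)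
    (h2 : -C P₁ - M P₂ = lam • P₂) : C P₁ ≠ 0 := by
  intro hCP₁
  have hP₂ : P₂ = 0 := hM.eq_zero_of_apply_eq_smul (μ := -lam) (by simpa using hlam)
    (by rw [neg_smul, ← h2, hCP₁, neg_zero, zero_sub, neg_neg])
  have hP₁ : P₁ = 0 := by
    rw [hP₂, map_zero, eq_comm, smul_eq_zero] at h1
    exact h1.resolve_left (by rintro rfl; simp at hlam)
  exact hP (by rw [hP₁, hP₂])

end ComplexHilbert

theorem complex_eigenvalue_bound_general
    {H : Type*} [NormedAddCommGroup H] [InnerProductSpace ℂ H] [CompleteSpace H]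
    (D : H →L[ℂ] H) (hD : IsSelfAdjoint D)
    (ψ : H) (hψ : ‖ψ‖ = 1) (lamD : ℝ) (hlamD : lamD < 0) (hDψ : D ψ = lamD • ψ)
    (ω : ℝ) (hω : 0 < ω)
    (hgap : ∀ v : H, ⟪ψ, v⟫_ℂ = 0 → ω * ‖v‖ ^ 2 ≤ (⟪v, D v⟫_ℂ).re)
    (C : H →L[ℂ] H) (hC : IsSelfAdjoint C)
    (hCpos : ∀ u : H, 0 ≤ (⟪u, C u⟫_ℂ).re)
    (βlo : ℝ)
    (f : ℝ → ℝ) (hf : Continuous f) (hmono : Monotone f) (hfl : ∀ t : ℝ, βlo ≤ f t)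
    (lam : ℂ) (hlam : lam.im ≠ 0)
    (P₁ P₂ : H) (hP : (P₁, P₂) ≠ (0, 0))
    (h1 : D P₂ = lam • P₁) (h2 : -C P₁ - (cfc f D) P₂ = lam • P₂) :
    lam.re ≤ -(f lamD) / 2 ∧ -(f lamD) / 2 ≤ -βlo / 2 := by
  refine ⟨?_, by linarith [hfl lamD]⟩
  have hC' : C.IsPositive := isPositive_def'.mpr ⟨hC, fun u ↦ by
    rw [reApplyInnerSelf_apply, inner_re_symm]; exact hCpos u⟩
  have hCP₁ := apply_ne_zero_of_block_eigenvector (cfc_predicate f D) hlam hP h1 h2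
  have ha : 0 < (⟪P₁, C P₁⟫_ℂ).re :=
    (hCpos P₁).lt_of_ne' (mt hC'.apply_eq_zero_of_re_inner_eq_zero hCP₁)
  have hpair := mul_inner_add_conj_mul_inner_add_inner_eq_zero hC (cfc_predicate f D) h1 h2
  rw [← mul_apply_eq_comp, cfc_mul_id f D] at hpair
  have hspec : ∀ t ∈ spectrum ℝ D, f lamD * t ≤ f t * t := fun t ht ↦ by
    rcases hD.spectrum_subset_of_eigenvector_of_gap hψ hDψ hgap ht with rfl | hωt
    · rfl
    · have ht0 : 0 < t := hω.trans_le hωt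
      exact mul_le_mul_of_nonneg_right (hmono (by linarith)) ht0.le
  have hMD_ge := re_inner_cfc_apply_le (f := fun t ↦ f lamD * t) (g := fun t ↦ f t * t) hspec P₂
  rw [cfc_const_mul_id (f lamD) D, smul_apply, ← Complex.coe_smul, inner_smul_right,
    Complex.re_ofReal_mul] at hMD_ge
  rw [← hC.ofReal_re_inner_self_apply, ← hD.ofReal_re_inner_self_apply,
    ← (cfc_predicate (fun t ↦ f t * t) D).ofReal_re_inner_self_apply] at hpair
  exact Complex.re_le_of_mul_add_conj_mul_add_eq_zero hlam ha hMD_ge hpair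

/-- Lemma 2.4 (complex-bound): with `D` bounded self-adjoint invertible having simple
negative ground state `D ψ = lamD • ψ` (`‖ψ‖ = 1`, `lamD < 0`) and spectral gap
`Re ⟪D v, v⟫ ≥ ω ‖v‖²` on `{ψ}⊥` (`ω > 0`), `C` bounded self-adjoint positive
semidefinite, and `M := cfc f D` for a continuous monotone nondecreasing `f ≥ βlo > 0`
(`βlo` plays the role of β₋), every non-real eigenvalue `lam` of the block operator
`L(p, q) = (D q, -C p - M q)` satisfies `Re lam ≤ -f(lamD)/2 ≤ -βlo/2`. -/
theorem complex_eigenvalue_bound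
    {H : Type*} [NormedAddCommGroup H] [InnerProductSpace ℂ H] [CompleteSpace H]
    (D Dinv : H →L[ℂ] H) (hD : IsSelfAdjoint D)
    (hD1 : D.comp Dinv = ContinuousLinearMap.id ℂ H)
    (hD2 : Dinv.comp D = ContinuousLinearMap.id ℂ H)
    (ψ : H) (hψ : ‖ψ‖ = 1) (lamD : ℝ) (hlamD : lamD < 0) (hDψ : D ψ = lamD • ψ)
    (ω : ℝ) (hω : 0 < ω)
    (hgap : ∀ v : H, ⟪ψ, v⟫_ℂ = 0 → ω * ‖v‖ ^ 2 ≤ (⟪v, D v⟫_ℂ).re)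
    (C : H →L[ℂ] H) (hC : IsSelfAdjoint C)
    (hCpos : ∀ u : H, 0 ≤ (⟪u, C u⟫_ℂ).re)
    (βlo : ℝ) (hβlo : 0 < βlo)
    (f : ℝ → ℝ) (hf : Continuous f) (hmono : Monotone f) (hfl : ∀ t : ℝ, βlo ≤ f t)
    (lam : ℂ) (hlam : lam.im ≠ 0)
    (P₁ P₂ : H) (hP : (P₁, P₂) ≠ (0, 0))
    (h1 : D P₂ = lam • P₁) (h2 : -C P₁ - (cfc f D) P₂ = lam • P₂) :
    lam.re ≤ -(f lamD) / 2 ∧ -(f lamD) / 2 ≤ -βlo / 2 :=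
  complex_eigenvalue_bound_general D hD ψ hψ lamD hlamD hDψ ω hω hgap C hC hCpos βlo f hf hmono hfl
    lam hlam P₁ P₂ hP h1 h2
end

section
/- Let H be a complex Hilbert space. Let D : H → H be a bounded self-adjoint invertible operator, ψ ∈ H a unit vector with D ψ = λ_D • ψ for some real λ_D < 0, and ω > 0 such that Re ⟪D v, v⟫ ≥ ω ‖v‖² for every v orthogonal to ψ. Let 0 < β₋ ≤ β₊, let f : ℝ → ℝ be continuous with β₋ ≤ f(t) ≤ β₊ for all t ∈ ℝ, and let λ > −β₋ be real. Let φ ∈ H satisfy that ⟪φ, ψ⟫ is a positive real number γ, set φ⊥ := φ − γ • ψ and C₀ := ((β₊ + λ)/((β₋ + λ) γ))² · Re ⟪D⁻¹ φ⊥, φ⊥⟫, and assume |λ_D| · C₀ ≤ 1. Then every u ∈ H satisfying the constraint ⟪u, D⁻¹((cfc f D) + λ I) φ⟫ = 0 obeys, with u⊥ := u − ⟪u, ψ⟫ • ψ, the lower bound Re ⟪D⁻¹ u, u⟫ ≥ (1 − |λ_D| C₀) · Re ⟪D⁻¹ u⊥, u⊥⟫ ≥ 0. -/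
/-!
Write `u = α ψ + u⊥` and `φ = γ ψ + φ⊥` with `u⊥, φ⊥ ⊥ ψ`. Since `D⁻¹ ψ = λ_D⁻¹ ψ` and, by the
gap, `D⁻¹` is nonnegative on `ψ⊥`, we get `Re ⟪u, D⁻¹ u⟫ = |α|² / λ_D + Re ⟪u⊥, D⁻¹ u⊥⟫`, so it
suffices to show `|α|² ≤ λ_D² C₀ Re ⟪u⊥, D⁻¹ u⊥⟫`.

Let `A = cfc (f + λ) D`. It commutes with `D⁻¹` and `A ψ = μ ψ` with `μ = f λ_D + λ ≥ β₋ + λ > 0`,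
so the constraint reads `γ μ λ_D⁻¹ α = -⟪φ⊥, D⁻¹ A u⊥⟫`. Cauchy–Schwarz for the semi-inner product
`⟪x, D⁻¹ y⟫` on `ψ⊥` bounds the right side by `Re ⟪φ⊥, D⁻¹ φ⊥⟫ · Re ⟪A u⊥, D⁻¹ A u⊥⟫`, and
`Re ⟪A v, D⁻¹ A v⟫ ≤ (β₊ + λ)² Re ⟪v, D⁻¹ v⟫` on `ψ⊥` because `(β₊ + λ)² - A² = R²` with
`R = cfc √((β₊ + λ)² - (f + λ)²) D`, which again commutes with `D⁻¹` and preserves `ψ⊥`.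
-/

open scoped InnerProductSpace

section Inverse

variable {M : Type*} [Monoid M] [StarMul M]

theorem IsSelfAdjoint.of_mul_eq_one {a b : M} (ha : IsSelfAdjoint a) (hba : b * a = 1) :
    IsSelfAdjoint b := by
  have : a * star b = 1 := by simpa [ha.star_eq] using congrArg star hba
  exact (left_inv_eq_right_inv hba this).symm

end Inverse

section InnerProduct

variable {𝕜 E : Type*} [RCLike 𝕜] [NormedAddCommGroup E] [InnerProductSpace 𝕜 E]

open RCLike

theorem inner_sub_inner_smul_eq_zero {ψ : E} (hψ : ‖ψ‖ = 1) (x : E) :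
    ⟪ψ, x - ⟪ψ, x⟫_𝕜 • ψ⟫_𝕜 = 0 := by
  simp [inner_sub_right, inner_smul_right, hψ]

theorem inner_apply_eq_zero_of_apply_eq_smul {T : E →L[𝕜] E} (hT : (T : E →ₗ[𝕜] E).IsSymmetric)
    {ψ : E} {μ : 𝕜} (hTψ : T ψ = μ • ψ) {v : E} (hv : ⟪ψ, v⟫_𝕜 = 0) : ⟪ψ, T v⟫_𝕜 = 0 := by
  rw [← hT.apply_clm, hTψ, inner_smul_left, hv, mul_zero]

theorem inner_apply_eq_of_apply_eq_smul {T : E →L[𝕜] E} (hT : (T : E →ₗ[𝕜] E).IsSymmetric)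
    {ψ : E} (hψ : ‖ψ‖ = 1) {μ : 𝕜} (hTψ : T ψ = μ • ψ) (x y : E) :
    ⟪x, T y⟫_𝕜 = ⟪x, ψ⟫_𝕜 * μ * ⟪ψ, y⟫_𝕜 + ⟪x - ⟪ψ, x⟫_𝕜 • ψ, T (y - ⟪ψ, y⟫_𝕜 • ψ)⟫_𝕜 := by
  have hψT : ⟪ψ, T (y - ⟪ψ, y⟫_𝕜 • ψ)⟫_𝕜 = 0 :=
    inner_apply_eq_zero_of_apply_eq_smul hT hTψ (inner_sub_inner_smul_eq_zero hψ y)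
  rw [inner_sub_left, inner_smul_left, hψT, mul_zero, sub_zero, map_sub, map_smul, hTψ,
    inner_sub_right, inner_smul_right, inner_smul_right]
  ring

theorem norm_inner_apply_sq_le {T : E →L[𝕜] E} (hT : (T : E →ₗ[𝕜] E).IsSymmetric)
    (K : Submodule 𝕜 E) (hK : ∀ v ∈ K, 0 ≤ re ⟪v, T v⟫_𝕜) {x y : E} (hx : x ∈ K)
    (hy : y ∈ K) : ‖⟪x, T y⟫_𝕜‖ ^ 2 ≤ re ⟪x, T x⟫_𝕜 * re ⟪y, T y⟫_𝕜 := by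
  let core : PreInnerProductSpace.Core 𝕜 K :=
    { inner a b := ⟪(a : E), T b⟫_𝕜
      conj_inner_symm a b := by simp only [inner_conj_symm, hT.apply_clm]
      re_inner_nonneg a := hK a a.2
      add_left a b c := by simp only [Submodule.coe_add, inner_add_left]
      smul_left a b r := by simp only [Submodule.coe_smul, inner_smul_left] }
  have h := @InnerProductSpace.Core.inner_mul_inner_self_le 𝕜 K _ _ _ core ⟨x, hx⟩ ⟨y, hy⟩
  change ‖⟪x, T y⟫_𝕜‖ * ‖⟪y, T x⟫_𝕜‖ ≤ re ⟪x, T x⟫_𝕜 * re ⟪y, T y⟫_𝕜 at h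
  rwa [← hT.apply_clm y x, ← inner_conj_symm (T y) x, norm_conj, ← sq] at h

theorem inner_apply_apply_eq_of_commute {A T : E →L[𝕜] E} (hA : (A : E →ₗ[𝕜] E).IsSymmetric)
    (hAT : Commute A T) (v : E) : ⟪A v, T (A v)⟫_𝕜 = ⟪v, T ((A * A) v)⟫_𝕜 := by
  rw [hA.apply_clm]
  exact congr(⟪v, $(hAT.eq) (A v)⟫_𝕜)

theorem re_inner_apply_apply_le {A R T : E →L[𝕜] E} {c : ℝ}
    (hA : (A : E →ₗ[𝕜] E).IsSymmetric) (hR : (R : E →ₗ[𝕜] E).IsSymmetric)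
    (hAT : Commute A T) (hRT : Commute R T) (hAR : A * A + R * R = (c : 𝕜) • 1) {v : E}
    (hRv : 0 ≤ re ⟪R v, T (R v)⟫_𝕜) : re ⟪A v, T (A v)⟫_𝕜 ≤ c * re ⟪v, T v⟫_𝕜 := by
  have hsum : ⟪A v, T (A v)⟫_𝕜 + ⟪R v, T (R v)⟫_𝕜 = c * ⟪v, T v⟫_𝕜 := by
    rw [inner_apply_apply_eq_of_commute hA hAT, inner_apply_apply_eq_of_commute hR hRT,
      ← inner_add_right, ← map_add, ← add_apply, hAR]
    simp [inner_smul_right]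
  have := congrArg re hsum
  simp only [map_add, re_ofReal_mul] at this
  linarith

theorem apply_eq_inv_smul_of_mul_eq_one {D Dinv : E →L[𝕜] E} (h : Dinv * D = 1) {ψ : E} {μ : 𝕜}
    (hμ : μ ≠ 0) (hDψ : D ψ = μ • ψ) : Dinv ψ = μ⁻¹ • ψ := by
  calc Dinv ψ = μ⁻¹ • Dinv (μ • ψ) := by rw [map_smul, inv_smul_smul₀ hμ]
    _ = μ⁻¹ • ψ := by rw [← hDψ, ← mul_apply_eq_comp, h, one_apply_eq_self]

theorem re_inner_apply_nonneg_of_mul_eq_one {D Dinv : E →L[𝕜] E}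
    (hDinv : (Dinv : E →ₗ[𝕜] E).IsSymmetric) (h : D * Dinv = 1) {ψ : E} {μ : 𝕜}
    (hDinvψ : Dinv ψ = μ • ψ) (hD_nonneg : ∀ v, ⟪ψ, v⟫_𝕜 = 0 → 0 ≤ re ⟪v, D v⟫_𝕜) {v : E}
    (hv : ⟪ψ, v⟫_𝕜 = 0) : 0 ≤ re ⟪v, Dinv v⟫_𝕜 := by
  have := hD_nonneg (Dinv v) (inner_apply_eq_zero_of_apply_eq_smul hDinv hDinvψ hv)
  rwa [← mul_apply_eq_comp, h, one_apply_eq_self, hDinv.apply_clm] at this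

theorem re_inner_apply_self_eq_of_apply_eq_smul {T : E →L[𝕜] E}
    (hT : (T : E →ₗ[𝕜] E).IsSymmetric) {ψ : E} (hψ : ‖ψ‖ = 1) {μ : ℝ} (hTψ : T ψ = (μ : 𝕜) • ψ)
    (u : E) :
    re ⟪u, T u⟫_𝕜 = ‖⟪ψ, u⟫_𝕜‖ ^ 2 * μ + re ⟪u - ⟪ψ, u⟫_𝕜 • ψ, T (u - ⟪ψ, u⟫_𝕜 • ψ)⟫_𝕜 := by
  rw [inner_apply_eq_of_apply_eq_smul hT hψ hTψ u u, map_add, ← inner_conj_symm u ψ,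
    mul_right_comm, RCLike.conj_mul]
  norm_cast

theorem sq_mul_norm_inner_sq_le_of_inner_apply_eq_zero [CompleteSpace E] {T A : E →L[𝕜] E}
    (hT : IsSelfAdjoint T) (hA : IsSelfAdjoint A) (hAT : Commute A T) {ψ : E} (hψ : ‖ψ‖ = 1)
    {τ μ : ℝ} (hTψ : T ψ = (τ : 𝕜) • ψ) (hAψ : A ψ = (μ : 𝕜) • ψ)
    (hT_nonneg : ∀ v, ⟪ψ, v⟫_𝕜 = 0 → 0 ≤ re ⟪v, T v⟫_𝕜) {c : ℝ}
    (hA_le : ∀ v, ⟪ψ, v⟫_𝕜 = 0 → re ⟪A v, T (A v)⟫_𝕜 ≤ c * re ⟪v, T v⟫_𝕜)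
    {φ : E} {γ : ℝ} (hφψ : ⟪ψ, φ⟫_𝕜 = γ) {u : E} (hu : ⟪T (A φ), u⟫_𝕜 = 0) :
    (γ * τ * μ) ^ 2 * ‖⟪ψ, u⟫_𝕜‖ ^ 2 ≤
      c * re ⟪φ - (γ : 𝕜) • ψ, T (φ - (γ : 𝕜) • ψ)⟫_𝕜 *
        re ⟪u - ⟪ψ, u⟫_𝕜 • ψ, T (u - ⟪ψ, u⟫_𝕜 • ψ)⟫_𝕜 := by
  have hφ' : ⟪ψ, φ - (γ : 𝕜) • ψ⟫_𝕜 = 0 := hφψ ▸ inner_sub_inner_smul_eq_zero hψ φ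
  set φ' := φ - (γ : 𝕜) • ψ
  set u' := u - ⟪ψ, u⟫_𝕜 • ψ
  have hTA : ((T * A : E →L[𝕜] E) : E →ₗ[𝕜] E).IsSymmetric :=
    ((hT.commute_iff hA).mp hAT.symm).isSymmetric
  have hTAψ : (T * A) ψ = ((τ * μ : ℝ) : 𝕜) • ψ := by
    rw [mul_apply_eq_comp, hAψ, map_smul, hTψ, smul_smul, mul_comm, ofReal_mul]
  have hsplit := inner_apply_eq_of_apply_eq_smul hTA hψ hTAψ φ u
  rw [← hTA.apply_clm, ← inner_conj_symm φ ψ, hφψ, conj_ofReal] at hsplit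
  have hu' : ⟪ψ, u'⟫_𝕜 = 0 := inner_sub_inner_smul_eq_zero hψ u
  have hAu' : ⟪ψ, A u'⟫_𝕜 = 0 := inner_apply_eq_zero_of_apply_eq_smul hA.isSymmetric hAψ hu'
  have hcs := norm_inner_apply_sq_le hT.isSymmetric (𝕜 ∙ ψ)ᗮ
    (fun v hv => hT_nonneg v (Submodule.mem_orthogonal_singleton_iff_inner_right.1 hv))
    (Submodule.mem_orthogonal_singleton_iff_inner_right.2 hφ')
    (Submodule.mem_orthogonal_singleton_iff_inner_right.2 hAu')
  calc (γ * τ * μ) ^ 2 * ‖⟪ψ, u⟫_𝕜‖ ^ 2 = ‖(γ : 𝕜) * ((τ * μ : ℝ) : 𝕜) * ⟪ψ, u⟫_𝕜‖ ^ 2 := by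
        simp [norm_mul, mul_pow, mul_assoc]
    _ = ‖⟪φ', T (A u')⟫_𝕜‖ ^ 2 := by
        rw [eq_neg_of_add_eq_zero_left (hsplit.symm.trans hu), norm_neg]; rfl
    _ ≤ re ⟪φ', T φ'⟫_𝕜 * re ⟪A u', T (A u')⟫_𝕜 := hcs
    _ ≤ re ⟪φ', T φ'⟫_𝕜 * (c * re ⟪u', T u'⟫_𝕜) :=
        mul_le_mul_of_nonneg_left (hA_le u' hu') (hT_nonneg φ' hφ')
    _ = _ := by ring

end InnerProduct

section FunctionalCalculus

variable {H : Type*} [NormedAddCommGroup H] [InnerProductSpace ℂ H]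

theorem mem_spectrum_of_apply_eq_smul {D : H →L[ℂ] H} {ψ : H} (hψ : ψ ≠ 0) {t : ℝ}
    (hDψ : D ψ = (t : ℂ) • ψ) : t ∈ spectrum ℝ D := by
  rintro ⟨u, hu⟩
  have hker : (u : H →L[ℂ] H) ψ = 0 := by
    simp [hu, hDψ, Algebra.algebraMap_eq_smul_one, Complex.coe_smul]
  apply hψ
  calc ψ = (↑u⁻¹ * u : H →L[ℂ] H) ψ := by rw [u.inv_mul]; rfl
    _ = 0 := by rw [mul_apply_eq_comp, hker, map_zero]

variable [CompleteSpace H]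

theorem cfc_apply_of_apply_eq_smul {D : H →L[ℂ] H} (hD : IsSelfAdjoint D) {ψ : H} {t : ℝ}
    (hDψ : D ψ = (t : ℂ) • ψ) {g : ℝ → ℝ} (hg : ContinuousOn g (spectrum ℝ D)) :
    cfc g D ψ = (g t : ℂ) • ψ := by
  rcases eq_or_ne ψ 0 with rfl | hψ
  · simp
  have ht := mem_spectrum_of_apply_eq_smul hψ hDψ
  suffices key : ∀ h : C(spectrum ℝ D, ℝ), cfcHom hD h ψ = (h ⟨t, ht⟩ : ℂ) • ψ by
    rw [cfc_apply g D hD hg]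
    exact key _
  intro h
  induction h using ContinuousMap.induction_on_of_compact with
  | const r =>
    have : ContinuousMap.const _ r = algebraMap ℝ C(spectrum ℝ D, ℝ) r := by ext; simp
    rw [this, AlgHomClass.commutes, Algebra.algebraMap_eq_smul_one]
    simp [Complex.coe_smul]
  | id => simpa [cfcHom_id hD] using hDψ
  | star_id => simpa [cfcHom_id hD] using hDψ
  | add f g hf hg => simp [hf, hg, add_smul]
  | mul f g hf hg =>
    rw [map_mul, mul_apply_eq_comp, hg, map_smul, hf, smul_smul, ContinuousMap.mul_apply,
      Complex.ofReal_mul, mul_comm]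
  | frequently f hf =>
    have hclosed : IsClosed {h : C(spectrum ℝ D, ℝ) | cfcHom hD h ψ = (h ⟨t, ht⟩ : ℂ) • ψ} :=
      isClosed_eq ((ContinuousLinearMap.apply ℂ H ψ).continuous.comp (cfcHom_continuous hD))
        ((Complex.continuous_ofReal.comp (continuous_eval_const _)).smul continuous_const)
    exact hclosed.closure_subset (mem_closure_iff_frequently.mpr hf)

theorem re_inner_cfc_apply_le_s10 {D T : H →L[ℂ] H} (hD : IsSelfAdjoint D) (hDT : Commute D T)
    {ψ : H} {t : ℝ} (hDψ : D ψ = (t : ℂ) • ψ) (hT_nonneg : ∀ v, ⟪ψ, v⟫_ℂ = 0 → 0 ≤ (⟪v, T v⟫_ℂ).re)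
    {g : ℝ → ℝ} (hg : Continuous g) {c : ℝ} (hgc : ∀ s, g s ^ 2 ≤ c) {v : H}
    (hv : ⟪ψ, v⟫_ℂ = 0) : (⟪cfc g D v, T (cfc g D v)⟫_ℂ).re ≤ c * (⟪v, T v⟫_ℂ).re := by
  set r : ℝ → ℝ := fun s => √(c - g s ^ 2)
  have hr : Continuous r := by fun_prop
  have hsq : cfc g D * cfc g D + cfc r D * cfc r D = (c : ℂ) • 1 := by
    have hpt : cfc (fun s => g s * g s + r s * r s) D = cfc (fun _ => c) D :=
      cfc_congr fun s _ => by simp [r, Real.mul_self_sqrt (sub_nonneg.2 (hgc s))]; ring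
    rw [← cfc_mul g g D, ← cfc_mul r r D, ← cfc_add D (fun s => g s * g s) (fun s => r s * r s),
      hpt, cfc_const c D, Algebra.algebraMap_eq_smul_one, ← Complex.coe_smul]
  have hRv : ⟪ψ, cfc r D v⟫_ℂ = 0 := inner_apply_eq_zero_of_apply_eq_smul
    (cfc_predicate r D).isSymmetric (cfc_apply_of_apply_eq_smul hD hDψ hr.continuousOn) hv
  exact re_inner_apply_apply_le (cfc_predicate g D).isSymmetric (cfc_predicate r D).isSymmetric
    (hDT.cfc_real g) (hDT.cfc_real r) hsq (hT_nonneg _ hRv)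

end FunctionalCalculus

theorem one_sub_abs_mul_mul_le_of_sq_mul_le {lam γ b μ c a P Q : ℝ} (hlam : lam < 0)
    (hγ : 0 < γ) (hb : 0 < b) (hbμ : b ≤ μ) (ha : 0 ≤ a)
    (h : (γ * lam⁻¹ * μ) ^ 2 * a ≤ c ^ 2 * P * Q) :
    (1 - |lam| * ((c / (b * γ)) ^ 2 * P)) * Q ≤ a * lam⁻¹ + Q := by
  have hb' : (γ * lam⁻¹ * b) ^ 2 * a ≤ c ^ 2 * P * Q := by
    refine le_trans ?_ h
    nlinarith [mul_nonneg (mul_nonneg (sq_nonneg (γ * lam⁻¹))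
      (sub_nonneg.2 (pow_le_pow_left₀ hb.le hbμ 2))) ha]
  have hne : γ * lam⁻¹ * b ≠ 0 := mul_ne_zero (mul_ne_zero hγ.ne' (inv_ne_zero hlam.ne)) hb.ne'
  have ha' : a ≤ lam ^ 2 * ((c / (b * γ)) ^ 2 * P) * Q :=
    calc a ≤ c ^ 2 * P * Q / (γ * lam⁻¹ * b) ^ 2 := by
          rwa [le_div_iff₀ (sq_pos_of_ne_zero hne), mul_comm]
      _ = lam ^ 2 * ((c / (b * γ)) ^ 2 * P) * Q := by field_simp
  have hlin : lam * ((c / (b * γ)) ^ 2 * P) * Q ≤ a * lam⁻¹ :=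
    calc lam * ((c / (b * γ)) ^ 2 * P) * Q = lam ^ 2 * ((c / (b * γ)) ^ 2 * P) * Q * lam⁻¹ := by
          field_simp
      _ ≤ a * lam⁻¹ := mul_le_mul_of_nonpos_right ha' (inv_nonpos.2 hlam.le)
  rw [abs_of_neg hlam]
  linarith

theorem constrained_Dinv_nonneg_general
    {H : Type*} [NormedAddCommGroup H] [InnerProductSpace ℂ H] [CompleteSpace H]
    (D Dinv : H →L[ℂ] H) (hD : IsSelfAdjoint D)
    (hD1 : D.comp Dinv = ContinuousLinearMap.id ℂ H)
    (hD2 : Dinv.comp D = ContinuousLinearMap.id ℂ H)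
    (ψ : H) (hψ : ‖ψ‖ = 1) (lamD : ℝ) (hlamD : lamD < 0) (hDψ : D ψ = lamD • ψ)
    (ω : ℝ) (hω : 0 < ω)
    (hgap : ∀ v : H, ⟪ψ, v⟫_ℂ = 0 → ω * ‖v‖ ^ 2 ≤ (⟪v, D v⟫_ℂ).re)
    (βlo βhi : ℝ)
    (f : ℝ → ℝ) (hf : Continuous f) (hfb : ∀ t : ℝ, βlo ≤ f t ∧ f t ≤ βhi)
    (lam : ℝ) (hlam : -βlo < lam)
    (φ : H) (γ : ℝ) (hγ : 0 < γ) (hφψ : ⟪ψ, φ⟫_ℂ = (γ : ℂ))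
    (C₀ : ℝ)
    (hC₀ : C₀ = ((βhi + lam) / ((βlo + lam) * γ)) ^ 2 *
      (⟪φ - (γ : ℂ) • ψ, Dinv (φ - (γ : ℂ) • ψ)⟫_ℂ).re)
    (hsmall : |lamD| * C₀ ≤ 1)
    (u : H)
    (hconstraint : ⟪Dinv ((cfc f D) φ + (lam : ℂ) • φ), u⟫_ℂ = 0) :
    (1 - |lamD| * C₀) *
        (⟪u - ⟪ψ, u⟫_ℂ • ψ, Dinv (u - ⟪ψ, u⟫_ℂ • ψ)⟫_ℂ).re ≤ (⟪u, Dinv u⟫_ℂ).re ∧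
      0 ≤ (1 - |lamD| * C₀) *
        (⟪u - ⟪ψ, u⟫_ℂ • ψ, Dinv (u - ⟪ψ, u⟫_ℂ • ψ)⟫_ℂ).re := by
  have hDinv : IsSelfAdjoint Dinv := hD.of_mul_eq_one hD2
  have hcomm : Commute D Dinv := hD1.trans hD2.symm
  have hDψ' : D ψ = (lamD : ℂ) • ψ := by rw [hDψ, Complex.coe_smul]
  have hDinvψ : Dinv ψ = ((lamD⁻¹ : ℝ) : ℂ) • ψ := by
    rw [Complex.ofReal_inv]
    exact apply_eq_inv_smul_of_mul_eq_one hD2 (by exact_mod_cast hlamD.ne) hDψ'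
  have hDinv_nonneg : ∀ v, ⟪ψ, v⟫_ℂ = 0 → 0 ≤ (⟪v, Dinv v⟫_ℂ).re := fun v hv =>
    re_inner_apply_nonneg_of_mul_eq_one hDinv.isSymmetric hD1 hDinvψ
      (fun w hw => (by positivity : 0 ≤ ω * ‖w‖ ^ 2).trans (hgap w hw)) hv
  set A := cfc (fun t => f t + lam) D
  have hAφ : A φ = cfc f D φ + (lam : ℂ) • φ := by
    simp [A, cfc_add_const lam f D, Algebra.algebraMap_eq_smul_one, Complex.coe_smul]
  have hAψ : A ψ = ((f lamD + lam : ℝ) : ℂ) • ψ :=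
    cfc_apply_of_apply_eq_smul hD hDψ' (by fun_prop)
  have hA_le : ∀ v, ⟪ψ, v⟫_ℂ = 0 →
      (⟪A v, Dinv (A v)⟫_ℂ).re ≤ (βhi + lam) ^ 2 * (⟪v, Dinv v⟫_ℂ).re := fun v hv =>
    re_inner_cfc_apply_le_s10 hD hcomm hDψ' hDinv_nonneg (by fun_prop)
      (fun t => by nlinarith [hfb t]) hv
  have hbound := sq_mul_norm_inner_sq_le_of_inner_apply_eq_zero hDinv (cfc_predicate _ D)
    (hcomm.cfc_real _) hψ hDinvψ hAψ hDinv_nonneg hA_le hφψ (hAφ ▸ hconstraint)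
  have hsplit := re_inner_apply_self_eq_of_apply_eq_smul hDinv.isSymmetric hψ hDinvψ u
  rw [hC₀] at hsmall ⊢
  rw [show (⟪u, Dinv u⟫_ℂ).re = _ from hsplit]
  exact ⟨one_sub_abs_mul_mul_le_of_sq_mul_le (μ := f lamD + lam) hlamD hγ (by linarith)
      (by linarith [hfb lamD]) (sq_nonneg _) hbound,
    mul_nonneg (sub_nonneg.2 hsmall) (hDinv_nonneg _ (inner_sub_inner_smul_eq_zero hψ u))⟩

/-- Quantitative form of Lemma 2.5 (n(Dinv)): with `D` bounded self-adjoint invertible,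
negative ground state `D ψ = lamD • ψ` (`‖ψ‖ = 1`, `lamD < 0`), spectral gap
`Re ⟪D v, v⟫ ≥ ω ‖v‖²` on `{ψ}⊥` (`ω > 0`), a continuous `f : ℝ → ℝ` with
`βlo ≤ f ≤ βhi` (`0 < βlo ≤ βhi`), a real `lam > -βlo`, `φ` with `⟪φ, ψ⟫ = γ > 0`
(paper convention: inner product linear in its first argument), `φ⊥ := φ - γ • ψ`,
`C₀ := ((βhi + lam)/((βlo + lam) γ))² · Re ⟪D⁻¹ φ⊥, φ⊥⟫`, and `|lamD| · C₀ ≤ 1`,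
every `u` with `⟪u, D⁻¹((cfc f D) + lam I) φ⟫ = 0` obeys, with `u⊥ := u - ⟪u, ψ⟫ • ψ`,
`Re ⟪D⁻¹ u, u⟫ ≥ (1 - |lamD| C₀) · Re ⟪D⁻¹ u⊥, u⊥⟫ ≥ 0`. -/
theorem constrained_Dinv_nonneg
    {H : Type*} [NormedAddCommGroup H] [InnerProductSpace ℂ H] [CompleteSpace H]
    (D Dinv : H →L[ℂ] H) (hD : IsSelfAdjoint D)
    (hD1 : D.comp Dinv = ContinuousLinearMap.id ℂ H)
    (hD2 : Dinv.comp D = ContinuousLinearMap.id ℂ H)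
    (ψ : H) (hψ : ‖ψ‖ = 1) (lamD : ℝ) (hlamD : lamD < 0) (hDψ : D ψ = lamD • ψ)
    (ω : ℝ) (hω : 0 < ω)
    (hgap : ∀ v : H, ⟪ψ, v⟫_ℂ = 0 → ω * ‖v‖ ^ 2 ≤ (⟪v, D v⟫_ℂ).re)
    (βlo βhi : ℝ) (hβlo : 0 < βlo) (hββ : βlo ≤ βhi)
    (f : ℝ → ℝ) (hf : Continuous f) (hfb : ∀ t : ℝ, βlo ≤ f t ∧ f t ≤ βhi)
    (lam : ℝ) (hlam : -βlo < lam)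
    (φ : H) (γ : ℝ) (hγ : 0 < γ) (hφψ : ⟪ψ, φ⟫_ℂ = (γ : ℂ))
    (C₀ : ℝ)
    (hC₀ : C₀ = ((βhi + lam) / ((βlo + lam) * γ)) ^ 2 *
      (⟪φ - (γ : ℂ) • ψ, Dinv (φ - (γ : ℂ) • ψ)⟫_ℂ).re)
    (hsmall : |lamD| * C₀ ≤ 1)
    (u : H)
    (hconstraint : ⟪Dinv ((cfc f D) φ + (lam : ℂ) • φ), u⟫_ℂ = 0) :
    (1 - |lamD| * C₀) *
        (⟪u - ⟪ψ, u⟫_ℂ • ψ, Dinv (u - ⟪ψ, u⟫_ℂ • ψ)⟫_ℂ).re ≤ (⟪u, Dinv u⟫_ℂ).re ∧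
      0 ≤ (1 - |lamD| * C₀) *
        (⟪u - ⟪ψ, u⟫_ℂ • ψ, Dinv (u - ⟪ψ, u⟫_ℂ • ψ)⟫_ℂ).re :=
  constrained_Dinv_nonneg_general D Dinv hD hD1 hD2 ψ hψ lamD hlamD hDψ ω hω hgap βlo βhi f hf hfb
    lam hlam φ γ hγ hφψ C₀ hC₀ hsmall u hconstraint
end
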